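/- Suppose every Q ∈ 𝐐 satisfies instrument exogeneity and generalized monotonicity, 𝐐 satisfies unrestricted potential outcomes, P satisfies P{Z = z} > 0 for all z ∈ 𝒵, and 𝐐₀(P, 𝐐) ≠ ∅. For each d ∈ 𝒟 let z*(d) ∈ 𝒵 be any maximizer of z ↦ P{D = d | Z = z}. Then for every d ∈ 𝒟: max_{z∈𝒵}{β_{d|z} + y^L(1 − Σ_{y∈𝒴} p_{yd|z})} = β_{d|z*(d)} + y^L(1 − Σ_{y∈𝒴} p_{yd|z*(d)}) and min_{z∈𝒵}{β_{d|z} + y^U(1 − Σ_{y∈𝒴} p_{yd|z})} = β_{d|z*(d)} + y^U(1 − Σ_{y∈𝒴} p_{yd|z*(d)}); that is, the generalized-monotonicity bounds coincide with the mean-independence bounds. -/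
import Mathlib


open Finset

/-- A probability mass function on a finite type. -/
structure ProbMass (α : Type) [Fintype α] where
  mass : α → ℝ
  nonneg : ∀ a, 0 ≤ mass a
  total : ∑ a, mass a = 1

/-- Probability of an event under a probability mass function. -/
noncomputable def pr {α : Type} [Fintype α] (Q : ProbMass α) (A : Set α) : ℝ :=
  ∑ a, A.indicator Q.mass a

/-- Expectation of a real-valued function under a probability mass function. -/
noncomputable def expect {α : Type} [Fintype α] (Q : ProbMass α) (f : α → ℝ) : ℝ :=
  ∑ a, Q.mass a * f a

/-- The latent space: potential outcomes `(Y_d)_{d ∈ D}` taking values in the finite set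
`𝒴 ⊂ ℝ`, potential treatments `(D_z)_{z ∈ Z}`, and the instrument `Z`. -/
abbrev Latent (𝒴 : Finset ℝ) (D Z : Type) : Type := (D → ↥𝒴) × (Z → D) × Z

/-- The observed space: `(Y, D, Z)`. -/
abbrev Obs (𝒴 : Finset ℝ) (D Z : Type) : Type := ↥𝒴 × D × Z

variable {𝒴 : Finset ℝ} {D Z : Type} [Fintype D] [DecidableEq D] [Fintype Z] [DecidableEq Z]

/-- The map `T` sending `((y_d), (d_z), z)` to `(y_{d_z}, d_z, z)`. -/
def Tmap (ω : Latent 𝒴 D Z) : Obs 𝒴 D Z := (ω.1 (ω.2.1 ω.2.2), ω.2.1 ω.2.2, ω.2.2)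

/-- `Q` rationalizes `P`: `P = Q ∘ T⁻¹`. -/
def Rationalizes (Q : ProbMass (Latent 𝒴 D Z)) (P : ProbMass (Obs 𝒴 D Z)) : Prop :=
  ∀ o : Obs 𝒴 D Z, P.mass o = pr Q {ω | Tmap ω = o}

/-- Instrument exogeneity: `((Y_d), (D_z))` is independent of `Z` under `Q`. -/
def Exog (Q : ProbMass (Latent 𝒴 D Z)) : Prop :=
  ∀ (yd : D → ↥𝒴) (dz : Z → D) (z : Z),
    pr Q {ω | ω.1 = yd ∧ ω.2.1 = dz ∧ ω.2.2 = z}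
      = pr Q {ω | ω.1 = yd ∧ ω.2.1 = dz} * pr Q {ω | ω.2.2 = z}

/-- `zs` maximally encourages treatment `d` under `Q`:
`Q{D_{zs} ≠ d and D_{z'} = d for some z'} = 0`. -/
def MaxEnc (Q : ProbMass (Latent 𝒴 D Z)) (d : D) (zs : Z) : Prop :=
  pr Q {ω | ω.2.1 zs ≠ d ∧ ∃ z' : Z, ω.2.1 z' = d} = 0

/-- Generalized monotonicity. -/
def GenMono (Q : ProbMass (Latent 𝒴 D Z)) : Prop :=
  ∀ d : D, ∃ zs : Z, MaxEnc Q d zs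

/-- `θ(Q) = (E_Q[Y_d])_{d ∈ D}`, the vector of average potential outcomes. -/
noncomputable def theta (Q : ProbMass (Latent 𝒴 D Z)) : D → ℝ :=
  fun d => expect Q fun ω => (ω.1 d : ℝ)

/-- `𝐐₀(P, 𝐐)`: the set of `Q ∈ 𝐐` that rationalize `P`. -/
def Q0 (P : ProbMass (Obs 𝒴 D Z)) (QQ : Set (ProbMass (Latent 𝒴 D Z))) :
    Set (ProbMass (Latent 𝒴 D Z)) :=
  {Q | Q ∈ QQ ∧ Rationalizes Q P}

/-- `Θ₀(P, 𝐐)`: the identified set for `θ(Q)`. -/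
noncomputable def Theta0 (P : ProbMass (Obs 𝒴 D Z))
    (QQ : Set (ProbMass (Latent 𝒴 D Z))) : Set (D → ℝ) :=
  theta '' Q0 P QQ

/-- Unrestricted potential outcomes: if `Q ∈ 𝐐`, `Q'` is exogenous, and the potential
treatments have the same distribution under `Q'` as under `Q`, then `Q' ∈ 𝐐`. -/
def UnrestrictedPO (QQ : Set (ProbMass (Latent 𝒴 D Z))) : Prop :=
  ∀ Q ∈ QQ, ∀ Q' : ProbMass (Latent 𝒴 D Z), Exog Q' →
    (∀ dz : Z → D, pr Q' {ω | ω.2.1 = dz} = pr Q {ω | ω.2.1 = dz}) → Q' ∈ QQ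

/-- `P{Z = z}`. -/
noncomputable def prZ (P : ProbMass (Obs 𝒴 D Z)) (z : Z) : ℝ :=
  pr P {o | o.2.2 = z}

/-- `P{D = d ∣ Z = z}`. -/
noncomputable def condD (P : ProbMass (Obs 𝒴 D Z)) (d : D) (z : Z) : ℝ :=
  pr P {o | o.2.1 = d ∧ o.2.2 = z} / prZ P z

/-- `p_{yd|z} = P{Y = y, D = d ∣ Z = z}`. -/
noncomputable def pObs (P : ProbMass (Obs 𝒴 D Z)) (y : ℝ) (d : D) (z : Z) : ℝ :=
  pr P {o | (o.1 : ℝ) = y ∧ o.2.1 = d ∧ o.2.2 = z} / prZ P z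

/-- `β_{d|z} = E_P[Y · 1{D = d} ∣ Z = z]`. -/
noncomputable def betaObs (P : ProbMass (Obs 𝒴 D Z)) (d : D) (z : Z) : ℝ :=
  (expect P fun o => if o.2.1 = d ∧ o.2.2 = z then (o.1 : ℝ) else 0) / prZ P z


section Helpers

variable {α : Type} [Fintype α]

lemma pr_eq_sum (Q : ProbMass α) (A : Set α) [DecidablePred (· ∈ A)] :
    pr Q A = ∑ a, if a ∈ A then Q.mass a else 0 := by
  unfold pr
  exact Finset.sum_congr rfl fun a _ => by rw [Set.indicator_apply]

lemma pr_eq_expect (Q : ProbMass α) (A : Set α) [DecidablePred (· ∈ A)] :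
    pr Q A = expect Q (fun a => if a ∈ A then (1:ℝ) else 0) := by
  rw [pr_eq_sum]
  exact Finset.sum_congr rfl fun a _ => by by_cases h : a ∈ A <;> simp [h]

lemma mass_eq_zero (Q : ProbMass α) {A : Set α} (h : pr Q A = 0) {a : α} (ha : a ∈ A) :
    Q.mass a = 0 := by
  classical
  rw [pr_eq_sum] at h
  have hnn : ∀ b ∈ Finset.univ, (0:ℝ) ≤ if b ∈ A then Q.mass b else 0 := fun b _ => by
    split
    · exact Q.nonneg b
    · exact le_rfl
  have h2 := (Finset.sum_eq_zero_iff_of_nonneg hnn).mp h a (Finset.mem_univ a)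
  simpa [ha] using h2

lemma expect_mono_ae (Q : ProbMass α) {f g : α → ℝ}
    (h : ∀ a, Q.mass a = 0 ∨ f a ≤ g a) : expect Q f ≤ expect Q g := by
  refine Finset.sum_le_sum fun a _ => ?_
  rcases h a with h0 | hle
  · simp [h0]
  · exact mul_le_mul_of_nonneg_left hle (Q.nonneg a)

lemma expect_congr_ae (Q : ProbMass α) {f g : α → ℝ}
    (h : ∀ a, Q.mass a = 0 ∨ f a = g a) : expect Q f = expect Q g := by
  refine Finset.sum_congr rfl fun a _ => ?_
  rcases h a with h0 | he
  · simp [h0]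
  · rw [he]

end Helpers

section Push

variable {𝒴 : Finset ℝ} {D Z : Type} [Fintype D] [DecidableEq D] [Fintype Z] [DecidableEq Z]

lemma expect_push {Q : ProbMass (Latent 𝒴 D Z)} {P : ProbMass (Obs 𝒴 D Z)}
    (hR : Rationalizes Q P) (f : Obs 𝒴 D Z → ℝ) :
    expect P f = expect Q (fun ω => f (Tmap ω)) := by
  classical
  unfold _root_.expect
  calc ∑ o, P.mass o * f o
      = ∑ o, (∑ ω, if Tmap ω = o then Q.mass ω else 0) * f o := by
        refine Finset.sum_congr rfl fun o _ => ?_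
        rw [hR o, pr_eq_sum]
        rfl
    _ = ∑ o, ∑ ω, (if Tmap ω = o then Q.mass ω * f o else 0) := by
        refine Finset.sum_congr rfl fun o _ => ?_
        rw [Finset.sum_mul]
        exact Finset.sum_congr rfl fun ω _ => by rw [ite_mul, zero_mul]
    _ = ∑ ω, ∑ o, (if Tmap ω = o then Q.mass ω * f o else 0) := Finset.sum_comm
    _ = ∑ ω, Q.mass ω * f (Tmap ω) := by
        refine Finset.sum_congr rfl fun ω _ => ?_
        rw [Finset.sum_ite_eq]
        simp

lemma pr_push {Q : ProbMass (Latent 𝒴 D Z)} {P : ProbMass (Obs 𝒴 D Z)}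
    (hR : Rationalizes Q P) (A : Set (Obs 𝒴 D Z)) :
    pr P A = pr Q (Tmap ⁻¹' A) := by
  classical
  rw [pr_eq_expect, pr_eq_expect, expect_push hR]
  rfl

lemma exog_atom {Q : ProbMass (Latent 𝒴 D Z)} (hex : Exog Q)
    (yd : D → ↥𝒴) (dz : Z → D) (z : Z) :
    Q.mass (yd, dz, z) = (∑ z', Q.mass (yd, dz, z')) * pr Q {ω : Latent 𝒴 D Z | ω.2.2 = z} := by
  classical
  have h := hex yd dz z
  rw [pr_eq_sum Q {ω : Latent 𝒴 D Z | ω.1 = yd ∧ ω.2.1 = dz ∧ ω.2.2 = z},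
      pr_eq_sum Q {ω : Latent 𝒴 D Z | ω.1 = yd ∧ ω.2.1 = dz}] at h
  simp only [Fintype.sum_prod_type, Set.mem_setOf_eq, ite_and, Finset.sum_ite_irrel,
    Finset.sum_const_zero, Finset.sum_ite_eq', Finset.mem_univ, if_true] at h
  rw [Finset.sum_comm] at h
  simpa [Finset.sum_ite_eq'] using h

lemma exog_master {Q : ProbMass (Latent 𝒴 D Z)} (hex : Exog Q)
    (h : (D → ↥𝒴) → (Z → D) → ℝ) (z : Z) :
    expect Q (fun ω => if ω.2.2 = z then h ω.1 ω.2.1 else 0)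
      = expect Q (fun ω => h ω.1 ω.2.1) * pr Q {ω : Latent 𝒴 D Z | ω.2.2 = z} := by
  classical
  unfold _root_.expect
  simp only [Fintype.sum_prod_type, Finset.sum_mul]
  refine Finset.sum_congr rfl fun yd _ => Finset.sum_congr rfl fun dz _ => ?_
  have hpt : ∀ z' : Z, Q.mass (yd, dz, z') * (if z' = z then h yd dz else 0)
      = if z' = z then Q.mass (yd, dz, z') * h yd dz else 0 := fun z' => by
    by_cases hz : z' = z <;> simp [hz]
  simp only [hpt, Finset.sum_ite_eq' Finset.univ z, Finset.mem_univ, if_true]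
  rw [exog_atom hex yd dz z, Finset.sum_mul, Finset.sum_mul]
  exact Finset.sum_congr rfl fun z' _ => by ring

lemma expect_sub {α : Type} [Fintype α] (Q : ProbMass α) (f g : α → ℝ) :
    expect Q (fun a => f a - g a) = expect Q f - expect Q g := by
  unfold _root_.expect
  rw [← Finset.sum_sub_distrib]
  exact Finset.sum_congr rfl fun a _ => by ring

lemma prZ_push {Q : ProbMass (Latent 𝒴 D Z)} {P : ProbMass (Obs 𝒴 D Z)}
    (hR : Rationalizes Q P) (z : Z) :
    prZ P z = pr Q {ω : Latent 𝒴 D Z | ω.2.2 = z} := by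
  unfold prZ
  rw [pr_push hR]
  rfl

lemma betaObs_eq {Q : ProbMass (Latent 𝒴 D Z)} {P : ProbMass (Obs 𝒴 D Z)}
    (hR : Rationalizes Q P) (hex : Exog Q) (hP : ∀ z : Z, 0 < prZ P z) (d : D) (z : Z) :
    betaObs P d z = expect Q (fun ω => if ω.2.1 z = d then ((ω.1 d : ℝ)) else 0) := by
  classical
  have h1 : expect P (fun o : Obs 𝒴 D Z => if o.2.1 = d ∧ o.2.2 = z then (o.1 : ℝ) else 0)
      = expect Q (fun ω => if ω.2.1 z = d then ((ω.1 d : ℝ)) else 0) * prZ P z := by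
    rw [expect_push hR, prZ_push hR,
        ← exog_master hex (fun yd dz => if dz z = d then ((yd d : ℝ)) else 0) z]
    refine expect_congr_ae Q fun ω => Or.inr ?_
    by_cases hz : ω.2.2 = z
    · by_cases hd : ω.2.1 z = d
      · simp [Tmap, hz, hd]
      · simp [Tmap, hz, hd]
    · simp [Tmap, hz]
  unfold betaObs
  rw [h1, mul_div_cancel_right₀ _ (ne_of_gt (hP z))]

lemma condD_eq {Q : ProbMass (Latent 𝒴 D Z)} {P : ProbMass (Obs 𝒴 D Z)}
    (hR : Rationalizes Q P) (hex : Exog Q) (hP : ∀ z : Z, 0 < prZ P z) (d : D) (z : Z) :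
    condD P d z = expect Q (fun ω => if ω.2.1 z = d then (1:ℝ) else 0) := by
  classical
  have h1 : pr P {o : Obs 𝒴 D Z | o.2.1 = d ∧ o.2.2 = z}
      = expect Q (fun ω => if ω.2.1 z = d then (1:ℝ) else 0) * prZ P z := by
    rw [pr_push hR, pr_eq_expect, prZ_push hR,
        ← exog_master hex (fun _ dz => if dz z = d then (1:ℝ) else 0) z]
    refine expect_congr_ae Q fun ω => Or.inr ?_
    by_cases hz : ω.2.2 = z
    · by_cases hd : ω.2.1 z = d
      · simp [Tmap, Set.mem_preimage, Set.mem_setOf_eq, hz, hd]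
      · simp [Tmap, Set.mem_preimage, Set.mem_setOf_eq, hz, hd]
    · simp [Tmap, Set.mem_preimage, Set.mem_setOf_eq, hz]
  unfold condD
  rw [h1, mul_div_cancel_right₀ _ (ne_of_gt (hP z))]

lemma sum_pObs_eq {P : ProbMass (Obs 𝒴 D Z)} (d : D) (z : Z) :
    ∑ y ∈ 𝒴, pObs P y d z = condD P d z := by
  classical
  unfold pObs condD
  rw [← Finset.sum_div]
  congr 1
  simp only [pr_eq_sum]
  rw [Finset.sum_comm]
  refine Finset.sum_congr rfl fun o _ => ?_
  simp only [Set.mem_setOf_eq, ite_and]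
  rw [Finset.sum_ite_eq 𝒴 ((o.1 : ℝ)) (fun _ => if o.2.1 = d then if o.2.2 = z then P.mass o else 0 else 0)]
  simp [o.1.2]

lemma enc_le {Q : ProbMass (Latent 𝒴 D Z)} {d : D} {zs : Z} (hzs : MaxEnc Q d zs)
    (f : Latent 𝒴 D Z → ℝ) (c : ℝ) (hc : ∀ ω, c ≤ f ω) (z : Z) :
    expect Q (fun ω => if ω.2.1 z = d then f ω else c)
      ≤ expect Q (fun ω => if ω.2.1 zs = d then f ω else c) := by
  refine expect_mono_ae Q fun ω => ?_
  by_cases h1 : ω.2.1 z = d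
  · by_cases h2 : ω.2.1 zs = d
    · right; simp [h1, h2]
    · left; exact mass_eq_zero Q hzs ⟨h2, z, h1⟩
  · by_cases h2 : ω.2.1 zs = d
    · right; simpa [h1, h2] using hc ω
    · right; simp [h1, h2]

lemma enc_ge {Q : ProbMass (Latent 𝒴 D Z)} {d : D} {zs : Z} (hzs : MaxEnc Q d zs)
    (f : Latent 𝒴 D Z → ℝ) (c : ℝ) (hc : ∀ ω, f ω ≤ c) (z : Z) :
    expect Q (fun ω => if ω.2.1 zs = d then f ω else c)
      ≤ expect Q (fun ω => if ω.2.1 z = d then f ω else c) := by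
  refine expect_mono_ae Q fun ω => ?_
  by_cases h1 : ω.2.1 z = d
  · by_cases h2 : ω.2.1 zs = d
    · right; simp [h1, h2]
    · left; exact mass_eq_zero Q hzs ⟨h2, z, h1⟩
  · by_cases h2 : ω.2.1 zs = d
    · right; simpa [h1, h2] using hc ω
    · right; simp [h1, h2]

lemma enc_congr {Q : ProbMass (Latent 𝒴 D Z)} {d : D} {zs zt : Z} (hzs : MaxEnc Q d zs)
    (hpi : expect Q (fun ω => if ω.2.1 zs = d then (1:ℝ) else 0)
      = expect Q (fun ω => if ω.2.1 zt = d then (1:ℝ) else 0))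
    (f : Latent 𝒴 D Z → ℝ) (c : ℝ) :
    expect Q (fun ω => if ω.2.1 zt = d then f ω else c)
      = expect Q (fun ω => if ω.2.1 zs = d then f ω else c) := by
  classical
  -- the event {D_zs = d, D_zt ≠ d} is null
  have he : expect Q (fun ω => if ω.2.1 zs = d ∧ ω.2.1 zt ≠ d then (1:ℝ) else 0) = 0 := by
    have hcg : expect Q (fun ω => if ω.2.1 zs = d ∧ ω.2.1 zt ≠ d then (1:ℝ) else 0)
        = expect Q (fun ω => (if ω.2.1 zs = d then (1:ℝ) else 0)
            - (if ω.2.1 zt = d then (1:ℝ) else 0)) := by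
      refine expect_congr_ae Q fun ω => ?_
      by_cases h1 : ω.2.1 zs = d
      · by_cases h2 : ω.2.1 zt = d
        · right; simp [h1, h2]
        · right; simp [h1, h2]
      · by_cases h2 : ω.2.1 zt = d
        · left; exact mass_eq_zero Q hzs ⟨h1, zt, h2⟩
        · right; simp [h1, h2]
    rw [hcg, expect_sub, hpi, sub_self]
  have hnull2 : ∀ ω : Latent 𝒴 D Z, ω.2.1 zs = d → ω.2.1 zt ≠ d → Q.mass ω = 0 := by
    intro ω h1 h2
    have hnn : ∀ b ∈ Finset.univ, (0:ℝ) ≤ Q.mass b *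
        (if b.2.1 zs = d ∧ b.2.1 zt ≠ d then (1:ℝ) else 0) := fun b _ => by
      have := Q.nonneg b
      split <;> simp [this]
    have h3 := (Finset.sum_eq_zero_iff_of_nonneg hnn).mp he ω (Finset.mem_univ ω)
    simpa [h1, h2] using h3
  refine expect_congr_ae Q fun ω => ?_
  by_cases h1 : ω.2.1 zs = d
  · by_cases h2 : ω.2.1 zt = d
    · right; simp [h1, h2]
    · left; exact hnull2 ω h1 h2
  · by_cases h2 : ω.2.1 zt = d
    · left; exact mass_eq_zero Q hzs ⟨h1, zt, h2⟩
    · right; simp [h1, h2]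

lemma combine {Q : ProbMass (Latent 𝒴 D Z)} {P : ProbMass (Obs 𝒴 D Z)}
    (hR : Rationalizes Q P) (hex : Exog Q) (hP : ∀ z : Z, 0 < prZ P z) (d : D) (z : Z)
    (c : ℝ) :
    betaObs P d z + c * (1 - ∑ y ∈ 𝒴, pObs P y d z)
      = expect Q (fun ω => if ω.2.1 z = d then ((ω.1 d : ℝ)) else c) := by
  classical
  rw [betaObs_eq hR hex hP d z, sum_pObs_eq d z, condD_eq hR hex hP d z]
  unfold _root_.expect
  have h1 : ∑ ω, Q.mass ω * (if ω.2.1 z = d then ((ω.1 d : ℝ)) else c)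
      = ∑ ω, (Q.mass ω * (if ω.2.1 z = d then ((ω.1 d : ℝ)) else 0) + c * Q.mass ω
          - c * (Q.mass ω * (if ω.2.1 z = d then (1:ℝ) else 0))) := by
    refine Finset.sum_congr rfl fun ω _ => ?_
    by_cases hd : ω.2.1 z = d <;> simp [hd] <;> ring
  rw [h1, Finset.sum_sub_distrib, Finset.sum_add_distrib, ← Finset.mul_sum, ← Finset.mul_sum,
    Q.total]
  ring

end Push

/-- Lemma 3.3: the generalized-monotonicity bounds coincide with the
mean-independence bounds:
`max_z {β_{d|z} + y^L(1 − Σ_y p_{yd|z})} = β_{d|z*(d)} + y^L(1 − Σ_y p_{yd|z*(d)})`, and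
`min_z {β_{d|z} + y^U(1 − Σ_y p_{yd|z})} = β_{d|z*(d)} + y^U(1 − Σ_y p_{yd|z*(d)})`. -/
theorem bounds_coincide
    (𝒴 : Finset ℝ) (h𝒴 : 2 ≤ 𝒴.card)
    (D Z : Type) [Fintype D] [DecidableEq D] [Nontrivial D]
    [Fintype Z] [DecidableEq Z] [Nontrivial Z]
    (QQ : Set (ProbMass (Latent 𝒴 D Z)))
    (hsub : ∀ Q ∈ QQ, Exog Q ∧ GenMono Q)
    (hU : UnrestrictedPO QQ)
    (P : ProbMass (Obs 𝒴 D Z))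
    (hP : ∀ z : Z, 0 < prZ P z)
    (hne : (Q0 P QQ).Nonempty)
    (zstar : D → Z)
    (hzstar : ∀ (d : D) (z : Z), condD P d z ≤ condD P d (zstar d)) :
    ∀ d : D,
      (Finset.univ.sup' Finset.univ_nonempty fun z : Z =>
          betaObs P d z + 𝒴.min' (Finset.card_pos.mp (by omega)) * (1 - ∑ y ∈ 𝒴, pObs P y d z))
        = betaObs P d (zstar d)
          + 𝒴.min' (Finset.card_pos.mp (by omega)) * (1 - ∑ y ∈ 𝒴, pObs P y d (zstar d)) ∧
      (Finset.univ.inf' Finset.univ_nonempty fun z : Z =>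
          betaObs P d z + 𝒴.max' (Finset.card_pos.mp (by omega)) * (1 - ∑ y ∈ 𝒴, pObs P y d z))
        = betaObs P d (zstar d)
          + 𝒴.max' (Finset.card_pos.mp (by omega)) * (1 - ∑ y ∈ 𝒴, pObs P y d (zstar d)) := by
  obtain ⟨Q, hQQ, hR⟩ := hne
  obtain ⟨hex, hmono⟩ := hsub Q hQQ
  intro d
  obtain ⟨zs, hzs⟩ := hmono d
  have hπ : expect Q (fun ω => if ω.2.1 zs = d then (1:ℝ) else 0)
      = expect Q (fun ω => if ω.2.1 (zstar d) = d then (1:ℝ) else 0) := by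
    refine le_antisymm ?_ (enc_le hzs (fun _ => (1:ℝ)) 0 (fun _ => zero_le_one) (zstar d))
    rw [← condD_eq hR hex hP d zs, ← condD_eq hR hex hP d (zstar d)]
    exact hzstar d zs
  have hcL : ∀ ω : Latent 𝒴 D Z,
      𝒴.min' (Finset.card_pos.mp (by omega)) ≤ ((ω.1 d : ℝ)) :=
    fun ω => Finset.min'_le 𝒴 _ (ω.1 d).2
  have hcU : ∀ ω : Latent 𝒴 D Z,
      ((ω.1 d : ℝ)) ≤ 𝒴.max' (Finset.card_pos.mp (by omega)) :=
    fun ω => Finset.le_max' 𝒴 _ (ω.1 d).2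
  constructor
  · apply le_antisymm
    · refine Finset.sup'_le _ _ fun z _ => ?_
      rw [combine hR hex hP d z _, combine hR hex hP d (zstar d) _]
      exact le_trans (enc_le hzs (fun ω => ((ω.1 d : ℝ))) _ hcL z)
        (enc_congr hzs hπ (fun ω => ((ω.1 d : ℝ))) _).symm.le
    · exact Finset.le_sup' (fun z : Z => betaObs P d z
        + 𝒴.min' (Finset.card_pos.mp (by omega)) * (1 - ∑ y ∈ 𝒴, pObs P y d z))
        (Finset.mem_univ (zstar d))
  · apply le_antisymm
    · exact Finset.inf'_le (fun z : Z => betaObs P d z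
        + 𝒴.max' (Finset.card_pos.mp (by omega)) * (1 - ∑ y ∈ 𝒴, pObs P y d z))
        (Finset.mem_univ (zstar d))
    · refine Finset.le_inf' _ _ fun z _ => ?_
      rw [combine hR hex hP d (zstar d) _, combine hR hex hP d z _]
      exact le_trans (enc_congr hzs hπ (fun ω => ((ω.1 d : ℝ))) _).le
        (enc_ge hzs (fun ω => ((ω.1 d : ℝ))) _ hcU z)
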